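/- Let n ≥ 3 be an even integer and write n = 2^k m with k ≥ 1 and m odd. Then the independence number of the prime-coprime graph of the dicyclic group Q_{4n} of order 4n equals 4n − 2m. -/

import Mathlib

/-- The prime-coprime graph: distinct vertices `g, h` are adjacent iff
`gcd (orderOf g) (orderOf h)` is `1` or a prime. -/
def primeCoprimeGraph (G : Type*) [Monoid G] : SimpleGraph G where
  Adj g h := g ≠ h ∧
    (Nat.gcd (orderOf g) (orderOf h) = 1 ∨ (Nat.gcd (orderOf g) (orderOf h)).Prime)
  symm := by
    constructor
    rintro g h ⟨hne, hd⟩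
    exact ⟨hne.symm, by rwa [Nat.gcd_comm]⟩
  loopless := by constructor; rintro g ⟨hne, -⟩; exact hne rfl

/-- A set of vertices is independent if no two of its elements are adjacent. -/
def IsIndepSet {V : Type*} (Γ : SimpleGraph V) (s : Set V) : Prop :=
  s.Pairwise fun a b => ¬ Γ.Adj a b

open scoped Classical in
/-- The independence number of a graph on a finite vertex set. -/
noncomputable def indepNum {V : Type*} [Fintype V] (Γ : SimpleGraph V) : ℕ :=
  Finset.univ.sup fun s : Finset V => if IsIndepSet Γ (s : Set V) then s.card else 0

/-- A graph is split if its vertex set can be partitioned into two disjoint nonempty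
subsets, one a clique and the other an independent set. -/
def IsSplit {V : Type*} (Γ : SimpleGraph V) : Prop :=
  ∃ K I : Set V, K.Nonempty ∧ I.Nonempty ∧ Disjoint K I ∧ K ∪ I = Set.univ ∧
    Γ.IsClique K ∧ IsIndepSet Γ I

/-!
The elements whose order is divisible by `4` form an independent set: for two of them the gcd
of the orders is a multiple of `4`, hence neither `1` nor a prime. Writing `n = 2 ^ k * m`, the
order `2n / gcd(2n, i)` of `a i` is prime to `4` exactly when `2 ^ k ∣ i`, so `2m` elements are
left out and the set has `4n - 2m` elements. Conversely, an independent set containing an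
element `g` of order prime to `4` contains no `xa i`: these have order `4`, and
`gcd (orderOf g) 4 ∈ {1, 2}`. It therefore lies in `⟨a 1⟩` and has at most `2n ≤ 4n - 2m`
elements.
-/

open Finset

lemma Nat.not_four_dvd_iff_dvd_two_mul {d j m : ℕ} (hm : Odd m) (hd : d ∣ 2 ^ j * m) :
    ¬ 4 ∣ d ↔ d ∣ 2 * m := by
  refine ⟨fun h4 => ?_, fun h2m h4 => ?_⟩
  · obtain ⟨e, d', hd', rfl⟩ := Nat.exists_eq_two_pow_mul_odd (ne_zero_of_dvd_ne_zero
      (mul_ne_zero (pow_ne_zero j two_ne_zero) hm.pos.ne') hd)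
    have he : e ≤ 1 := by
      by_contra! he
      exact h4 (dvd_mul_of_dvd_left (pow_dvd_pow 2 he) d')
    have hd'm : d' ∣ m :=
      (hd'.coprime_two_right.pow_right j).dvd_of_dvd_mul_left (dvd_of_mul_left_dvd hd)
    simpa using mul_dvd_mul (pow_dvd_pow 2 he) hd'm
  · exact hm.not_two_dvd_nat (Nat.dvd_of_mul_dvd_mul_left two_pos (h4.trans h2m : 2 * 2 ∣ 2 * m))

lemma ZMod.card_filter_dvd_val {N d : ℕ} [NeZero N] (hd : d ∣ N) :
    #{x : ZMod N | d ∣ x.val} = N / d :=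
  calc #{x : ZMod N | d ∣ x.val} = #{j ∈ range N | j ≡ 0 [MOD d]} := by
        refine card_nbij' ZMod.val (fun j => (j : ZMod N)) ?_ ?_ ?_ ?_ <;>
          intro x hx <;> simp_all [ZMod.val_lt, Nat.mod_eq_of_lt, Nat.modEq_zero_iff_dvd]
    _ = N / d := by
        rw [← Nat.count_eq_card_filter_range,
          Nat.count_modEq_card N (Nat.pos_of_dvd_of_pos hd (NeZero.pos N))]
        simp [Nat.mod_eq_zero_of_dvd hd]

section IndepNum

variable {V : Type*} [Fintype V] (Γ : SimpleGraph V)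

lemma card_le_indepNum {s : Finset V} (hs : IsIndepSet Γ s) : #s ≤ indepNum Γ := by
  classical
  simpa [indepNum, hs] using
    le_sup (f := fun s : Finset V => if IsIndepSet Γ s then #s else 0) (mem_univ s)

lemma indepNum_le {b : ℕ} (h : ∀ s : Finset V, IsIndepSet Γ s → #s ≤ b) : indepNum Γ ≤ b := by
  classical
  refine Finset.sup_le fun s _ => ?_
  split_ifs with hs
  exacts [h s hs, b.zero_le]

end IndepNum

namespace primeCoprimeGraph

variable {G : Type*} [Monoid G]

lemma not_adj_of_four_dvd {g h : G} (hg : 4 ∣ orderOf g) (hh : 4 ∣ orderOf h) :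
    ¬ (primeCoprimeGraph G).Adj g h := by
  rintro ⟨-, hgcd⟩
  have h4 : 4 ∣ Nat.gcd (orderOf g) (orderOf h) := Nat.dvd_gcd hg hh
  generalize Nat.gcd (orderOf g) (orderOf h) = d at h4 hgcd
  rcases hgcd with rfl | hp
  · omega
  · obtain rfl := (Nat.prime_dvd_prime_iff_eq Nat.prime_two hp).1 (dvd_trans ⟨2, rfl⟩ h4)
    omega

lemma isIndepSet_setOf_four_dvd : IsIndepSet (primeCoprimeGraph G) {g | 4 ∣ orderOf g} :=
  fun _ hg _ hh _ => not_adj_of_four_dvd hg hh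

lemma adj_of_orderOf_eq_four {g h : G} (hg : ¬ 4 ∣ orderOf g) (hh : orderOf h = 4) :
    (primeCoprimeGraph G).Adj g h := by
  refine ⟨fun hgh => hg (hgh ▸ hh ▸ dvd_rfl), ?_⟩
  rw [hh]
  have hd : Nat.gcd (orderOf g) 4 ∣ 4 := Nat.gcd_dvd_right _ _
  have hd4 : Nat.gcd (orderOf g) 4 ≠ 4 := fun h => hg (h ▸ Nat.gcd_dvd_left _ _)
  generalize Nat.gcd (orderOf g) 4 = d at hd hd4
  have : d ≤ 4 := Nat.le_of_dvd (by norm_num) hd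
  interval_cases d <;> simp_all [Nat.prime_two]

end primeCoprimeGraph

namespace QuaternionGroup

variable {n k m : ℕ} [NeZero n]

lemma not_four_dvd_orderOf_a_iff (hm : Odd m) (hnkm : n = 2 ^ k * m) (i : ZMod (2 * n)) :
    ¬ 4 ∣ orderOf (a i) ↔ 2 ^ k ∣ i.val := by
  have h2n : 2 * n = 2 * m * 2 ^ k := by rw [hnkm]; ring
  have hdvd : orderOf (a i) ∣ 2 ^ (k + 1) * m := by
    rw [orderOf_a, show 2 ^ (k + 1) * m = 2 * n by rw [hnkm]; ring]
    exact Nat.div_dvd_of_dvd (Nat.gcd_dvd_left _ _)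
  rw [Nat.not_four_dvd_iff_dvd_two_mul hm hdvd, orderOf_a]
  generalize i.val = v
  rw [Nat.div_dvd_iff_dvd_mul (Nat.gcd_dvd_left _ _) (Nat.gcd_pos_of_pos_left _ (NeZero.pos _)),
    mul_comm _ (2 * m), h2n, Nat.mul_dvd_mul_iff_left (by linarith [hm.pos]), Nat.dvd_gcd_iff]
  exact and_iff_right (Dvd.intro_left _ rfl)

lemma card_filter_not_four_dvd_orderOf (hm : Odd m) (hnkm : n = 2 ^ k * m) :
    #{g : QuaternionGroup n | ¬ 4 ∣ orderOf g} = 2 * m := by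
  have hfilter : ({g : QuaternionGroup n | ¬ 4 ∣ orderOf g} : Finset _) =
      ({i : ZMod (2 * n) | 2 ^ k ∣ i.val} : Finset _).image a := by
    ext (i | i) <;> simp [not_four_dvd_orderOf_a_iff hm hnkm, orderOf_xa]
  rw [hfilter, card_image_of_injective _ fun _ _ => a.inj,
    ZMod.card_filter_dvd_val ⟨2 * m, by rw [hnkm]; ring⟩]
  exact Nat.div_eq_of_eq_mul_left (by positivity) (by rw [hnkm]; ring)

lemma card_le_of_isIndepSet_of_not_four_dvd {s : Finset (QuaternionGroup n)}
    (hs : IsIndepSet (primeCoprimeGraph _) (s : Set (QuaternionGroup n))) {g : QuaternionGroup n}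
    (hg : g ∈ s) (hg4 : ¬ 4 ∣ orderOf g) : #s ≤ 2 * n := by
  have hsub : s ⊆ univ.image a := by
    rintro (i | i) hi
    · simp
    · exact absurd (primeCoprimeGraph.adj_of_orderOf_eq_four hg4 (orderOf_xa i))
        (hs hg hi (fun h => hg4 (h ▸ (orderOf_xa i).symm ▸ dvd_rfl)))
  simpa using (card_le_card hsub).trans card_image_le

end QuaternionGroup

open QuaternionGroup in
theorem indepNum_dicyclic_even_general (n k m : ℕ) [NeZero n]
    (hm : Odd m) (hnkm : n = 2 ^ k * m) :
    indepNum (primeCoprimeGraph (QuaternionGroup n)) = 4 * n - 2 * m := by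
  set S : Finset (QuaternionGroup n) := {g | 4 ∣ orderOf g}
  have hS : #S = 4 * n - 2 * m := by
    have hsplit : #S + #{g : QuaternionGroup n | ¬ 4 ∣ orderOf g} = 4 * n := by
      rw [card_filter_add_card_filter_not, card_univ, QuaternionGroup.card]
    rw [card_filter_not_four_dvd_orderOf hm hnkm] at hsplit
    omega
  have hmn : m ≤ n := hnkm ▸ Nat.le_mul_of_pos_left m (by positivity)
  refine le_antisymm (indepNum_le _ fun t ht => ?_) (hS ▸ card_le_indepNum _ ?_)
  · by_cases htS : t ⊆ S
    · exact hS ▸ card_le_card htS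
    · obtain ⟨g, hgt, hgS⟩ := not_subset.1 htS
      have := card_le_of_isIndepSet_of_not_four_dvd ht hgt (by simpa [S] using hgS)
      omega
  · simpa [S] using primeCoprimeGraph.isIndepSet_setOf_four_dvd

theorem indepNum_dicyclic_even (n k m : ℕ) [NeZero n] (hn : 3 ≤ n) (hk : 1 ≤ k)
    (hm : Odd m) (hnkm : n = 2 ^ k * m) :
    indepNum (primeCoprimeGraph (QuaternionGroup n)) = 4 * n - 2 * m :=
  indepNum_dicyclic_even_general n k m hm hnkm
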